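/- Let $\Psi=e^\psi-1$ be an Orlicz function. The condition (HJ): there exists $K>0$ with $\psi(su)\le K(s\ln(1+s)+s\psi(u))$ for all $s,u\ge K$, is equivalent to the condition (HJ'): there exists $K'>0$ with $\Psi(su)\le(s\Psi(u))^{K's}$ for all $s,u\ge K'$. -/

import Mathlib

open MeasureTheory ProbabilityTheory

/-- An Orlicz function: convex, strictly increasing on `[0,∞)`, vanishing at `0`. -/
def IsOrlicz (Ψ : ℝ → ℝ) : Prop :=
  ConvexOn ℝ (Set.Ici 0) Ψ ∧ StrictMonoOn Ψ (Set.Ici 0) ∧ Ψ 0 = 0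

/-- The associated exponent `ψ` with `Ψ = e^ψ - 1`. -/
noncomputable def orliczExp (Ψ : ℝ → ℝ) (x : ℝ) : ℝ := Real.log (1 + Ψ x)

/-- The Orlicz (Luxemburg) norm of a Banach-space-valued random variable. -/
noncomputable def orliczNorm {Ω : Type*} [MeasurableSpace Ω] (μ : Measure Ω)
    (Ψ : ℝ → ℝ) {F : Type*} [NormedAddCommGroup F] (X : Ω → F) : ℝ :=
  sInf {a : ℝ | 0 < a ∧ ∫⁻ ω, ENNReal.ofReal (Ψ (‖X ω‖ / a)) ∂μ ≤ 1}

/-- `X` has finite Orlicz norm. -/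
def OrliczFinite {Ω : Type*} [MeasurableSpace Ω] (μ : Measure Ω)
    (Ψ : ℝ → ℝ) {F : Type*} [NormedAddCommGroup F] (X : Ω → F) : Prop :=
  ∃ a : ℝ, 0 < a ∧ ∫⁻ ω, ENNReal.ofReal (Ψ (‖X ω‖ / a)) ∂μ ≤ 1

/-- Condition (HJ): `ψ(su) ≤ K (s ln(1+s) + s ψ(u))` for all `s, u ≥ K`. -/
def HJCond (Ψ : ℝ → ℝ) : Prop :=
  ∃ K > (0:ℝ), ∀ s u : ℝ, K ≤ s → K ≤ u →
    orliczExp Ψ (s * u) ≤ K * (s * Real.log (1 + s) + s * orliczExp Ψ u)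

/-- A Rademacher (symmetric ±1) random variable. -/
def IsRademacher {Ω : Type*} [MeasurableSpace Ω] (μ : Measure Ω) (ε : Ω → ℝ) : Prop :=
  μ {ω | ε ω = 1} = 1/2 ∧ μ {ω | ε ω = -1} = 1/2

/-! Taking logarithms, (HJ') reads `ψ(su) ≲ K' s log (s Ψ(u))`. Once `s Ψ(u) ≥ 4`, which holds for
large `s, u` because an Orlicz function grows at least linearly,
`(log (1 + s) + ψ(u)) / 2 ≤ log (s Ψ(u)) ≤ log (1 + s) + ψ(u)`, so the two conditions agree up to
the constant `log 2` lost in passing from `Ψ` to `1 + Ψ`, which is absorbed by `s log (1 + s)`. -/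

open Real

def HJPrimeCond (Ψ : ℝ → ℝ) : Prop :=
  ∃ K' > (0:ℝ), ∀ s u : ℝ, K' ≤ s → K' ≤ u → Ψ (s * u) ≤ (s * Ψ u) ^ (K' * s)

lemma log_one_add_add_log_one_add_le {a b : ℝ} (ha : 1 ≤ a) (hb : 1 ≤ b) (hab : 4 ≤ a * b) :
    log (1 + a) + log (1 + b) ≤ 2 * log (a * b) := by
  rw [← log_mul (by positivity) (by positivity), ← log_rpow (by positivity)]
  apply log_le_log (by positivity)
  rw [rpow_two]
  nlinarith

lemma log_mul_le_log_one_add_add_log_one_add {a b : ℝ} (ha : 0 < a) (hb : 0 < b) :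
    log (a * b) ≤ log (1 + a) + log (1 + b) := by
  rw [log_mul ha.ne' hb.ne']
  gcongr <;> linarith

lemma le_rpow_of_log_one_add_le {x A c : ℝ} (hx : 0 ≤ x) (hA : 0 < A)
    (h : log (1 + x) ≤ c * log A) : x ≤ A ^ c :=
  calc x ≤ 1 + x := by linarith
    _ = exp (log (1 + x)) := (exp_log (by linarith)).symm
    _ ≤ exp (c * log A) := exp_le_exp.2 h
    _ = A ^ c := by rw [rpow_def_of_pos hA, mul_comm]

lemma log_one_add_le_of_le_rpow {x A c : ℝ} (hx : 0 ≤ x) (hA : 0 < A) (h : x ≤ A ^ c) :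
    log (1 + x) ≤ log 2 + max (c * log A) 0 := by
  rw [rpow_def_of_pos hA, mul_comm] at h
  have h1 : 1 ≤ exp (max (c * log A) 0) := one_le_exp (le_max_right _ _)
  have h2 : exp (c * log A) ≤ exp (max (c * log A) 0) := exp_le_exp.2 (le_max_left _ _)
  calc log (1 + x) ≤ log (2 * exp (max (c * log A) 0)) := log_le_log (by linarith) (by linarith)
    _ = log 2 + max (c * log A) 0 := by rw [log_mul two_ne_zero (exp_pos _).ne', log_exp]

namespace IsOrlicz

variable {Ψ : ℝ → ℝ} (hΨ : IsOrlicz Ψ)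
include hΨ

lemma pos {x : ℝ} (hx : 0 < x) : 0 < Ψ x :=
  hΨ.2.2 ▸ hΨ.2.1 Set.self_mem_Ici (Set.mem_Ici.2 hx.le) hx

lemma nonneg {x : ℝ} (hx : 0 ≤ x) : 0 ≤ Ψ x := by
  rcases hx.eq_or_lt with rfl | hx
  · exact hΨ.2.2.ge
  · exact (hΨ.pos hx).le

lemma mul_apply_one_le {x : ℝ} (hx : 1 ≤ x) : x * Ψ 1 ≤ Ψ x := by
  have hx0 : 0 < x := one_pos.trans_le hx
  have := hΨ.1.secant_mono (a := 0) Set.self_mem_Ici (Set.mem_Ici.2 zero_le_one)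
    (Set.mem_Ici.2 hx0.le) one_ne_zero hx0.ne' hx
  simp only [hΨ.2.2, sub_zero, div_one] at this
  rwa [le_div_iff₀ hx0, mul_comm] at this

lemma one_le_apply {x : ℝ} (hx : 1 ≤ x) (hx' : (Ψ 1)⁻¹ ≤ x) : 1 ≤ Ψ x := by
  have h1 := hΨ.pos one_pos
  calc 1 = (Ψ 1)⁻¹ * Ψ 1 := (inv_mul_cancel₀ h1.ne').symm
    _ ≤ x * Ψ 1 := by gcongr
    _ ≤ Ψ x := hΨ.mul_apply_one_le hx

lemma hjPrimeCond_of_hjCond : HJCond Ψ → HJPrimeCond Ψ := by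
  rintro ⟨K, hK, hHJ⟩
  set K' := max (2 * K) (max 4 (Ψ 1)⁻¹)
  refine ⟨K', lt_max_of_lt_right (lt_max_of_lt_left four_pos), fun s u hs hu ↦ ?_⟩
  obtain ⟨h2Ks, h4s, -⟩ := max_le_iff.1 hs |>.imp_right max_le_iff.1
  obtain ⟨h2Ku, h4u, hu_inv⟩ := max_le_iff.1 hu |>.imp_right max_le_iff.1
  have hΨu : 1 ≤ Ψ u := hΨ.one_le_apply (by linarith) hu_inv
  have hA : 4 ≤ s * Ψ u := by nlinarith
  have hs_log : 0 ≤ s * log (s * Ψ u) := mul_nonneg (by linarith) (log_nonneg (by linarith))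
  apply le_rpow_of_log_one_add_le (hΨ.nonneg (mul_nonneg (by linarith) (by linarith)))
    (by linarith)
  calc log (1 + Ψ (s * u)) ≤ K * s * (log (1 + s) + log (1 + Ψ u)) := by
        have := hHJ s u (by linarith) (by linarith)
        simp only [orliczExp] at this
        linarith
    _ ≤ K * s * (2 * log (s * Ψ u)) :=
        mul_le_mul_of_nonneg_left (log_one_add_add_log_one_add_le (by linarith) hΨu hA)
          (mul_nonneg hK.le (by linarith))
    _ = 2 * K * (s * log (s * Ψ u)) := by ring
    _ ≤ K' * (s * log (s * Ψ u)) := mul_le_mul_of_nonneg_right (le_max_left _ _) hs_log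
    _ = K' * s * log (s * Ψ u) := by ring

lemma hjCond_of_hjPrimeCond : HJPrimeCond Ψ → HJCond Ψ := by
  rintro ⟨K', hK', hHJ'⟩
  refine ⟨K' + 1, by linarith, fun s u hs hu ↦ ?_⟩
  have hΨu : 0 < Ψ u := hΨ.pos (by linarith)
  have hKs : 0 ≤ K' * s := mul_nonneg hK'.le (by linarith)
  have hlog_s : log 2 ≤ log (1 + s) := log_le_log two_pos (by linarith)
  have hlog_Ψu : 0 ≤ log (1 + Ψ u) := log_nonneg (by linarith)
  have hbound := log_one_add_le_of_le_rpow (hΨ.nonneg (mul_nonneg (by linarith) (by linarith)))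
    (mul_pos (by linarith) hΨu) (hHJ' s u (by linarith) (by linarith))
  simp only [orliczExp]
  calc log (1 + Ψ (s * u)) ≤ log 2 + max (K' * s * log (s * Ψ u)) 0 := hbound
    _ ≤ s * log (1 + s) + K' * s * (log (1 + s) + log (1 + Ψ u)) := by
        gcongr
        · exact hlog_s.trans (le_mul_of_one_le_left (hlog_s.trans' (log_nonneg one_le_two))
            (by linarith))
        · exact max_le (mul_le_mul_of_nonneg_left
            (log_mul_le_log_one_add_add_log_one_add (by linarith) hΨu) hKs)
            (mul_nonneg hKs (by linarith [log_nonneg one_le_two]))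
    _ ≤ (K' + 1) * (s * log (1 + s) + s * log (1 + Ψ u)) := by
        nlinarith [mul_nonneg (by linarith : (0:ℝ) ≤ s) hlog_Ψu]

end IsOrlicz

/-- Condition (HJ) is equivalent to (HJ'): `Ψ(su) ≤ (s Ψ(u))^(K's)` for `s,u ≥ K'`. -/
theorem stmt6 {Ψ : ℝ → ℝ} (hΨ : IsOrlicz Ψ) :
    HJCond Ψ ↔
      ∃ K' > (0:ℝ), ∀ s u : ℝ, K' ≤ s → K' ≤ u →
        Ψ (s * u) ≤ (s * Ψ u) ^ (K' * s) :=
  ⟨hΨ.hjPrimeCond_of_hjCond, hΨ.hjCond_of_hjPrimeCond⟩
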